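/- arXiv:1705.04116 — 3 statements merged into one kernel-verified Lean document; each statement's English description precedes it below -/
import Mathlib

section
/- Let η(ζ) = Σ_{k=0}^M a_k ζ^k with real coefficients a_k, θ ∈ ℝ, z_1 ∈ ℂ, λ > 0, and define the panel curve z_p(ζ) = (ζ + i·η(ζ))e^{iθ} + z_1 for ζ ∈ [0, λ]. Let R > 0 and z_0 ∈ ℂ be such that |z_p(ζ) - z_0| ≤ R for all ζ ∈ [0, λ]. Then for every z with |z - z_0| > R, ∫_0^λ γ(ζ)/(z - z_p(ζ)) dζ = Σ_{n=1}^{∞} f_n/(z - z_0)^n, where f_n = ∫_0^λ γ(ζ)·(z_p(ζ) - z_0)^{n-1} dζ and γ(ζ) = Σ_{j=0}^N b_j ζ^j, the series converging absolutely. -/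
/-!
Expand `1 / (z - z_p) = Σ (z_p - z₀)ⁿ / (z - z₀)ⁿ⁺¹`. The ratio `|z_p - z₀| / |z - z₀|` is at most
`R / |z - z₀| < 1` uniformly along the panel, so the integrals of the norms of the terms are dominated
by a convergent geometric series; this justifies integrating term by term and gives absolute
convergence.
-/

open Finset MeasureTheory

theorem hasSum_mul_pow_div_pow_succ {c w u : ℂ} (h : ‖w‖ < ‖u‖) :
    HasSum (fun n : ℕ => c * w ^ n / u ^ (n + 1)) (c / (u - w)) := by
  have hu : u ≠ 0 := norm_pos_iff.mp ((norm_nonneg w).trans_lt h)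
  have hratio : ‖w / u‖ < 1 := by rwa [norm_div, div_lt_one ((norm_nonneg w).trans_lt h)]
  have hterms : (fun n : ℕ => c / u * (w / u) ^ n) = fun n => c * w ^ n / u ^ (n + 1) := by
    funext n
    rw [div_pow, pow_succ]
    field_simp
  have hvalue : c / u * (1 - w / u)⁻¹ = c / (u - w) := by
    field_simp
  simpa only [hterms, hvalue] using (hasSum_geometric_of_norm_lt_one hratio).mul_left (c / u)

section

variable {α : Type*} [MeasurableSpace α] {μ : Measure α} {g w : α → ℂ} {R : ℝ}

theorem integral_norm_mul_pow_le (hg : Integrable g μ) (hwR : ∀ᵐ x ∂μ, ‖w x‖ ≤ R) (n : ℕ) :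
    ∫ x, ‖g x * w x ^ n‖ ∂μ ≤ (∫ x, ‖g x‖ ∂μ) * R ^ n := by
  rw [← integral_mul_const]
  refine integral_mono_of_nonneg (.of_forall fun _ => norm_nonneg _) (hg.norm.mul_const _) ?_
  filter_upwards [hwR] with x hx
  rw [norm_mul, norm_pow]
  gcongr

theorem hasSum_integral_div_sub (hg : Integrable g μ) (hw : AEStronglyMeasurable w μ)
    (hwR : ∀ᵐ x ∂μ, ‖w x‖ ≤ R) (hR : 0 ≤ R) {u : ℂ} (hRu : R < ‖u‖) :
    HasSum (fun n : ℕ => (∫ x, g x * w x ^ n ∂μ) / u ^ (n + 1)) (∫ x, g x / (u - w x) ∂μ) ∧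
    Summable (fun n : ℕ => ‖(∫ x, g x * w x ^ n ∂μ) / u ^ (n + 1)‖) := by
  set F : ℕ → α → ℂ := fun n x => g x * w x ^ n / u ^ (n + 1)
  have hu : 0 < ‖u‖ := hR.trans_lt hRu
  have hF_int (n : ℕ) : Integrable (F n) μ := by
    refine (hg.mul_bdd (hw.pow n) (c := R ^ n) ?_).div_const _
    filter_upwards [hwR] with x hx
    rw [Pi.pow_apply, norm_pow]
    gcongr
  have hF_norm (n : ℕ) : ∫ x, ‖F n x‖ ∂μ ≤ (∫ x, ‖g x‖ ∂μ) / ‖u‖ * (R / ‖u‖) ^ n := by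
    simp only [F, norm_div, integral_div, norm_pow]
    calc (∫ x, ‖g x * w x ^ n‖ ∂μ) / ‖u‖ ^ (n + 1)
        ≤ (∫ x, ‖g x‖ ∂μ) * R ^ n / ‖u‖ ^ (n + 1) := by
          gcongr
          exact integral_norm_mul_pow_le hg hwR n
      _ = (∫ x, ‖g x‖ ∂μ) / ‖u‖ * (R / ‖u‖) ^ n := by
          rw [div_pow, pow_succ]
          field_simp
  have hsum : Summable fun n => ∫ x, ‖F n x‖ ∂μ :=
    .of_nonneg_of_le (fun _ => integral_nonneg fun _ => norm_nonneg _) hF_norm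
      ((summable_geometric_of_lt_one (div_nonneg hR hu.le) ((div_lt_one hu).mpr hRu)).mul_left _)
  have hlim : ∫ x, ∑' n, F n x ∂μ = ∫ x, g x / (u - w x) ∂μ := by
    refine integral_congr_ae ?_
    filter_upwards [hwR] with x hx
    exact (hasSum_mul_pow_div_pow_succ (hx.trans_lt hRu)).tsum_eq
  have hterm (n : ℕ) : (∫ x, g x * w x ^ n ∂μ) / u ^ (n + 1) = ∫ x, F n x ∂μ :=
    (integral_div _ _).symm
  simp_rw [hterm]
  exact ⟨hlim ▸ hasSum_integral_of_summable_integral_norm hF_int hsum,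
    hsum.of_nonneg_of_le (fun _ => norm_nonneg _) fun n => norm_integral_le_integral_norm _⟩

end

/-- Multipole (far-field) expansion of the panel integral: if the panel curve
z_p(ζ) = (ζ + i·Σ a_k ζ^k)e^{iθ} + z₁ stays within distance R of z₀ on [0,λ],
then for |z - z₀| > R the panel integral ∫₀^λ γ(ζ)/(z - z_p(ζ)) dζ equals the
absolutely convergent series Σ_{n≥1} f_n/(z-z₀)^n with
f_n = ∫₀^λ γ(ζ)(z_p(ζ)-z₀)^{n-1} dζ. -/
theorem stmt8 (N M : ℕ) (a : ℕ → ℝ) (b : ℕ → ℂ) (θ : ℝ) (z1 z0 z : ℂ)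
    (lam R : ℝ) (hlam : 0 < lam) (hR : 0 < R)
    (zp : ℝ → ℂ)
    (hzp : ∀ ζ : ℝ, zp ζ =
      ((ζ:ℂ) + Complex.I * ∑ k ∈ range (M+1), (a k : ℂ) * (ζ:ℂ)^k)
        * Complex.exp (Complex.I * (θ:ℂ)) + z1)
    (g : ℝ → ℂ) (hg : ∀ ζ : ℝ, g ζ = ∑ j ∈ range (N+1), b j * (ζ:ℂ)^j)
    (hRbound : ∀ ζ ∈ Set.Icc (0:ℝ) lam, ‖zp ζ - z0‖ ≤ R)
    (hz : R < ‖z - z0‖) :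
    HasSum (fun n : ℕ =>
        (∫ ζ in (0:ℝ)..lam, g ζ * (zp ζ - z0)^n) / (z - z0)^(n+1))
      (∫ ζ in (0:ℝ)..lam, g ζ / (z - zp ζ)) ∧
    Summable (fun n : ℕ =>
        ‖(∫ ζ in (0:ℝ)..lam, g ζ * (zp ζ - z0)^n) / (z - z0)^(n+1)‖) := by
  have hzp_cont : Continuous zp := by
    rw [funext hzp]
    fun_prop
  have hg_cont : Continuous g := by
    rw [funext hg]
    fun_prop
  have hbound : ∀ᵐ ζ ∂volume.restrict (Set.Ioc 0 lam), ‖zp ζ - z0‖ ≤ R :=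
    ae_restrict_of_forall_mem measurableSet_Ioc fun ζ hζ => hRbound ζ (Set.Ioc_subset_Icc_self hζ)
  have expansion := hasSum_integral_div_sub (w := fun ζ => zp ζ - z0) hg_cont.integrableOn_Ioc
    (hzp_cont.sub continuous_const).aestronglyMeasurable hbound hR.le hz
  simpa only [sub_sub_sub_cancel_right, intervalIntegral.integral_of_le hlam.le] using expansion
end

section
/- Fix g_0, g_1, ... ∈ ℂ (the true strength coefficients) and for m,k ≥ 0 functions h_{m+1,k}(λ) bounded as λ → 0 with h_{m+1,k}(λ) = O(1). Suppose the (N+1)×(N+1) matrix A(λ) with entries A_{m,k} = λ^{k+m+1} h_{m+1,k}(λ) is invertible with ‖A(λ)^{-1}‖ ≤ C·max_m λ^{-(m+1)}·max_k λ^{-k} appropriately (i.e., A = D_1 H D_2 with diagonal D_1, D_2 of powers of λ and H invertible uniformly). Let c_m = Σ_{k=0}^∞ g_k λ^{k+m+1} h_{m+1,k} (assumed absolutely convergent for small λ) and b = A^{-1}c. Then b = g_{0:N} + b_2 where every component of b_2 = A^{-1}c_2 (c_{2,m} = Σ_{k>N} g_k λ^{k+m+1} h_{m+1,k}) satisfies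 b_{2,k} = O(λ^{N+1-k}), and in particular b_{2,0} = O(λ^{N+1}). -/
/-!
Splitting the series for `c` at `k = N` gives `c = A g_{0:N} + c₂`, hence `b = g_{0:N} + A⁻¹ c₂`.
Since `h` is bounded, `c₂,m = O(λ^{N+1+m+1})`, while `(A⁻¹)_{k,m} = O(λ^{-(k+m+1)})`; each term of
`(A⁻¹ c₂)_k` is therefore `O(λ^{N+1-k})`, and there are only `N + 1` of them.
-/

open Finset
open scoped Matrix

lemma summable_nat_add_mul_pow {u : ℕ → ℝ} {l : ℝ} (hl : l ≠ 0) (M : ℕ) (hs : Summable fun k => u k * l ^ k) :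
    Summable fun j => u (j + M) * l ^ j := by
  refine (((summable_nat_add_iff M).2 hs).mul_right (l ^ M)⁻¹).congr fun j => ?_
  rw [pow_add]
  field_simp

section BoundedCoefficients

variable {𝕜 : Type*} [RCLike 𝕜] {a x : ℕ → 𝕜} {C l : ℝ}

lemma norm_mul_pow_mul_le (hl : 0 ≤ l) (hx : ∀ k, ‖x k‖ ≤ C) (n k : ℕ) :
    ‖a k * (l : 𝕜) ^ (k + n) * x k‖ ≤ C * l ^ n * (‖a k‖ * l ^ k) := by
  rw [norm_mul, norm_mul, norm_pow, RCLike.norm_ofReal, abs_of_nonneg hl]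
  calc ‖a k‖ * l ^ (k + n) * ‖x k‖ ≤ ‖a k‖ * l ^ (k + n) * C := by gcongr; exact hx k
    _ = C * l ^ n * (‖a k‖ * l ^ k) := by ring

lemma summable_mul_pow_mul (hl : 0 ≤ l) (hx : ∀ k, ‖x k‖ ≤ C)
    (hs : Summable fun k => ‖a k‖ * l ^ k) (n : ℕ) :
    Summable fun k => a k * (l : 𝕜) ^ (k + n) * x k :=
  (hs.mul_left (C * l ^ n)).of_norm_bounded (norm_mul_pow_mul_le hl hx n)

lemma norm_tsum_mul_pow_mul_le (hl : 0 ≤ l) (hx : ∀ k, ‖x k‖ ≤ C)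
    (hs : Summable fun k => ‖a k‖ * l ^ k) (n : ℕ) :
    ‖∑' k, a k * (l : 𝕜) ^ (k + n) * x k‖ ≤ C * l ^ n * ∑' k, ‖a k‖ * l ^ k :=
  tsum_of_norm_bounded (hs.hasSum.mul_left (C * l ^ n)) (norm_mul_pow_mul_le hl hx n)

lemma norm_tsum_nat_add_mul_pow_mul_le {r : ℝ} (hl : 0 ≤ l) (hlr : l ≤ r) (hx : ∀ k, ‖x k‖ ≤ C)
    (M : ℕ) (hs : Summable fun j => ‖a (j + M)‖ * r ^ j) (n : ℕ) :
    ‖∑' j, a (j + M) * (l : 𝕜) ^ (j + M + n) * x (j + M)‖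
      ≤ C * (∑' j, ‖a (j + M)‖ * r ^ j) * l ^ (M + n) := by
  have hpow : ∀ j, ‖a (j + M)‖ * l ^ j ≤ ‖a (j + M)‖ * r ^ j := fun j =>
    mul_le_mul_of_nonneg_left (pow_le_pow_left₀ hl hlr j) (norm_nonneg _)
  have hsl : Summable fun j => ‖a (j + M)‖ * l ^ j :=
    hs.of_nonneg_of_le (fun j => mul_nonneg (norm_nonneg _) (pow_nonneg hl j)) hpow
  have hC : 0 ≤ C := (norm_nonneg _).trans (hx 0)
  simp only [add_assoc _ M n]
  calc _ ≤ C * l ^ (M + n) * ∑' j, ‖a (j + M)‖ * l ^ j :=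
        norm_tsum_mul_pow_mul_le hl (fun j => hx (j + M)) hsl (M + n)
    _ ≤ C * l ^ (M + n) * ∑' j, ‖a (j + M)‖ * r ^ j := by gcongr
    _ = _ := by ring

end BoundedCoefficients

lemma tsum_eq_sum_fin_add_tsum_nat_add {G : Type*} [AddCommGroup G] [TopologicalSpace G]
    [IsTopologicalAddGroup G] [T2Space G] {f : ℕ → G} (hf : Summable f) (n : ℕ) :
    ∑' k, f k = ∑ k : Fin n, f k + ∑' j, f (j + n) := by
  rw [Fin.sum_univ_eq_sum_range f n, hf.sum_add_tsum_nat_add]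

namespace Matrix

variable {n : Type*} [Fintype n] [DecidableEq n] {α : Type*} [CommRing α]

lemma nonsing_inv_mulVec_mulVec_add {A : Matrix n n α} (hA : IsUnit A) (x y : n → α) :
    A⁻¹ *ᵥ (A *ᵥ x + y) = x + A⁻¹ *ᵥ y := by
  rw [mulVec_add, mulVec_mulVec, nonsing_inv_mul _ ((isUnit_iff_isUnit_det A).mp hA),
    one_mulVec]

end Matrix

lemma norm_mulVec_le_of_scaled_bounds {α : Type*} [NormedRing α] {N : ℕ}
    {M : Matrix (Fin (N + 1)) (Fin (N + 1)) α} {v : Fin (N + 1) → α} {C₁ C₂ l : ℝ} (hl : 0 < l)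
    (hM : ∀ k m : Fin (N + 1), ‖M k m‖ ≤ C₁ / l ^ ((k : ℕ) + (m : ℕ) + 1))
    (hv : ∀ m : Fin (N + 1), ‖v m‖ ≤ C₂ * l ^ (N + 1 + ((m : ℕ) + 1))) (k : Fin (N + 1)) :
    ‖(M *ᵥ v) k‖ ≤ (N + 1) * C₁ * C₂ * l ^ (N + 1 - (k : ℕ)) := by
  have hterm : ∀ m : Fin (N + 1), ‖M k m * v m‖ ≤ C₁ * C₂ * l ^ (N + 1 - (k : ℕ)) := by
    intro m
    have hexp : N + 1 + ((m : ℕ) + 1) = ((k : ℕ) + (m : ℕ) + 1) + (N + 1 - (k : ℕ)) := by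
      have := k.isLt; omega
    calc ‖M k m * v m‖ ≤ ‖M k m‖ * ‖v m‖ := norm_mul_le _ _
      _ ≤ C₁ / l ^ ((k : ℕ) + (m : ℕ) + 1) * (C₂ * l ^ (N + 1 + ((m : ℕ) + 1))) :=
          mul_le_mul (hM k m) (hv m) (norm_nonneg _) ((norm_nonneg _).trans (hM k m))
      _ = C₁ * C₂ * l ^ (N + 1 - (k : ℕ)) := by
          rw [hexp, pow_add l ((k : ℕ) + (m : ℕ) + 1)]
          field_simp
  calc ‖(M *ᵥ v) k‖ = ‖∑ m, M k m * v m‖ := rfl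
    _ ≤ ∑ m, ‖M k m * v m‖ := norm_sum_le _ _
    _ ≤ ∑ _m : Fin (N + 1), C₁ * C₂ * l ^ (N + 1 - (k : ℕ)) := sum_le_sum fun m _ => hterm m
    _ = (N + 1) * C₁ * C₂ * l ^ (N + 1 - (k : ℕ)) := by
        rw [sum_const, card_univ, Fintype.card_fin, nsmul_eq_mul]
        push_cast
        ring
/-- Linear-algebra core of the far-field convergence estimate: for the
matching system A(λ)b = c with A_{m,k} = λ^{k+m+1}h_{m+1,k}(λ), h = O(1),
A = D₁HD₂ with uniformly invertible H (encoded by the entrywise bound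
|A⁻¹_{k,m}| ≤ C/λ^{k+m+1}), and absolutely convergent data
c_m = Σ_k g_k λ^{k+m+1}h_{m+1,k}, the solution splits as b = g + b₂ with
b₂ = A⁻¹c₂ (c₂ the tail over k > N) and b₂,k = O(λ^{N+1-k}). -/
theorem stmt14 (N : ℕ) (g : ℕ → ℂ) (h : ℕ → ℕ → ℝ → ℂ)
    (A : ℝ → Matrix (Fin (N+1)) (Fin (N+1)) ℂ)
    (hA : ∀ l : ℝ, ∀ m k : Fin (N+1),
      A l m k = (l:ℂ)^((k:ℕ) + (m:ℕ) + 1) * h ((m:ℕ)+1) (k:ℕ) l)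
    (hbound : ∃ C lam0 : ℝ, 0 < lam0 ∧
      ∀ m k : ℕ, ∀ l ∈ Set.Ioo (0:ℝ) lam0, ‖h (m+1) k l‖ ≤ C)
    (hinv : ∃ C lam0 : ℝ, 0 < lam0 ∧ ∀ l ∈ Set.Ioo (0:ℝ) lam0,
      IsUnit (A l) ∧
      ∀ k m : Fin (N+1), ‖(A l)⁻¹ k m‖ ≤ C / l^((k:ℕ) + (m:ℕ) + 1))
    (hsum : ∃ lam0 : ℝ, 0 < lam0 ∧ ∀ l ∈ Set.Ioo (0:ℝ) lam0,
      Summable (fun k : ℕ => ‖g k‖ * l^k))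
    (c c2 : ℝ → Fin (N+1) → ℂ)
    (hc : ∀ l : ℝ, ∀ m : Fin (N+1), c l m =
      ∑' k : ℕ, g k * (l:ℂ)^(k + (m:ℕ) + 1) * h ((m:ℕ)+1) k l)
    (hc2 : ∀ l : ℝ, ∀ m : Fin (N+1), c2 l m =
      ∑' k : ℕ, g (k + N + 1) * (l:ℂ)^((k + N + 1) + (m:ℕ) + 1)
        * h ((m:ℕ)+1) (k + N + 1) l)
    (b b2 : ℝ → Fin (N+1) → ℂ)
    (hb : ∀ l : ℝ, b l = (A l)⁻¹.mulVec (c l))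
    (hb2 : ∀ l : ℝ, b2 l = (A l)⁻¹.mulVec (c2 l)) :
    ∃ C lam1 : ℝ, 0 < lam1 ∧ ∀ l ∈ Set.Ioo (0:ℝ) lam1,
      (∀ k : Fin (N+1), b l k = g (k:ℕ) + b2 l k) ∧
      (∀ k : Fin (N+1), ‖b2 l k‖ ≤ C * l^(N + 1 - (k:ℕ))) := by
  obtain ⟨Ch, l₁, hl₁, hCh⟩ := hbound
  obtain ⟨Ci, l₂, hl₂, hCi⟩ := hinv
  obtain ⟨l₃, hl₃, hsum⟩ := hsum
  set r := l₃ / 2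
  have hr : r ∈ Set.Ioo 0 l₃ := ⟨half_pos hl₃, half_lt_self hl₃⟩
  have hgr_tail : Summable fun j => ‖g (j + (N + 1))‖ * r ^ j :=
    summable_nat_add_mul_pow (u := fun k => ‖g k‖) hr.1.ne' (N + 1) (hsum r hr)
  set S := ∑' j, ‖g (j + (N + 1))‖ * r ^ j
  refine ⟨(N + 1) * Ci * (Ch * S), min (min l₁ l₂) r, by positivity, fun l ⟨hl, hl'⟩ => ?_⟩
  obtain ⟨⟨hll₁, hll₂⟩, hlr⟩ := by simpa only [lt_min_iff] using hl'
  have hhl : ∀ m k, ‖h (m + 1) k l‖ ≤ Ch := fun m k => hCh m k l ⟨hl, hll₁⟩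
  have hgl := hsum l ⟨hl, hlr.trans hr.2⟩
  have hsplit : c l = A l *ᵥ (fun k => g k) + c2 l := by
    funext m
    have hterms : Summable fun k => g k * (l : ℂ) ^ (k + (m : ℕ) + 1) * h ((m : ℕ) + 1) k l :=
      summable_mul_pow_mul hl.le (hhl m) hgl ((m : ℕ) + 1)
    rw [Pi.add_apply, hc, hc2, tsum_eq_sum_fin_add_tsum_nat_add hterms (N + 1)]
    congr 1
    simp only [Matrix.mulVec, dotProduct, hA]
    exact sum_congr rfl fun k _ => by ring
  have hc2_le : ∀ m : Fin (N + 1), ‖c2 l m‖ ≤ Ch * S * l ^ (N + 1 + ((m : ℕ) + 1)) :=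
    fun m => hc2 l m ▸ norm_tsum_nat_add_mul_pow_mul_le (x := fun k => h ((m : ℕ) + 1) k l)
      hl.le hlr.le (hhl m) (N + 1) hgr_tail ((m : ℕ) + 1)
  refine ⟨fun k => ?_, hb2 l ▸ norm_mulVec_le_of_scaled_bounds hl (hCi l ⟨hl, hll₂⟩).2 hc2_le⟩
  rw [hb, hb2, hsplit, Matrix.nonsing_inv_mulVec_mulVec_add (hCi l ⟨hl, hll₂⟩).1]
  rfl
end

section
/- Under the assumptions of the far-field matching construction, the error in the n-th multipole coefficient satisfies f̂_n − f_n = Σ_{k=0}^N b_{2,k} λ^{k+n} h_{n,k} − Σ_{k=N+1}^∞ g_k λ^{k+n} h_{n,k} = O(λ^{n+N+1}) for every n ≥ 1, and hence the smallest-order error term over all coefficients is O(λ^{2N+3}); dividing by one power of λ to account for the number of panels scaling as 1/λ, the far-field convergence rate of the panel strength approximation is O(λ^{2N+2}). -/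
/-!
Substituting `b = g + b₂` splits `f̂ₙ - fₙ` into the perturbation `∑_{k ≤ N} b₂,ₖ λ^(k+n) hₙ,ₖ` and
the tail `∑_{k > N} gₖ λ^(k+n) hₙ,ₖ` of the exact series. Each perturbation term is
`O(λ^(N+1-k) λ^(k+n)) = O(λ^(n+N+1))`, and the tail is `λ^(n+N+1)` times a series dominated, for
`λ ≤ r`, by `∑ ‖g_{k+N+1}‖ r^k`. Matching makes the error vanish for `n ≤ N + 1`, so a non-zero error
has `n ≥ N + 2` and is `O(λ^(2N+3))`.
-/

open Finset

lemma sum_add_sub_tsum_eq_sum_sub_tsum_nat_add {G : Type*} [AddCommGroup G] [TopologicalSpace G]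
    [IsTopologicalAddGroup G] [T2Space G] {a c : ℕ → G} (ha : Summable a) (m : ℕ) :
    ∑ k ∈ range m, (a k + c k) - ∑' k, a k = ∑ k ∈ range m, c k - ∑' k, a (k + m) := by
  rw [← ha.sum_add_tsum_nat_add m, sum_add_distrib]
  abel

section MultipoleSeries

variable {l : ℝ}

lemma norm_mul_ofReal_pow_mul (hl : 0 ≤ l) (c u : ℂ) (j : ℕ) :
    ‖c * (l : ℂ) ^ j * u‖ = ‖c‖ * l ^ j * ‖u‖ := by
  rw [norm_mul, norm_mul, norm_pow, Complex.norm_real, Real.norm_of_nonneg hl]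

lemma norm_mul_ofReal_pow_add_mul_le {c u : ℂ} {C r : ℝ} (hl : 0 ≤ l) (hlr : l ≤ r)
    (hu : ‖u‖ ≤ C) (k j : ℕ) :
    ‖c * (l : ℂ) ^ (k + j) * u‖ ≤ C * l ^ j * (‖c‖ * r ^ k) := by
  rw [norm_mul_ofReal_pow_mul hl]
  calc ‖c‖ * l ^ (k + j) * ‖u‖ = (‖c‖ * l ^ k) * l ^ j * ‖u‖ := by ring
    _ ≤ (‖c‖ * r ^ k) * l ^ j * C := by
        have hr : 0 ≤ r := hl.trans hlr
        gcongr
    _ = C * l ^ j * (‖c‖ * r ^ k) := by ring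

lemma summable_mul_ofReal_pow_add_mul {a u : ℕ → ℂ} {C : ℝ} (hl : 0 ≤ l)
    (hu : ∀ k, ‖u k‖ ≤ C) (ha : Summable fun k => ‖a k‖ * l ^ k) (j : ℕ) :
    Summable fun k => a k * (l : ℂ) ^ (k + j) * u k :=
  (ha.mul_left (C * l ^ j)).of_norm_bounded fun k =>
    norm_mul_ofReal_pow_add_mul_le hl le_rfl (hu k) k j

lemma summable_norm_nat_add_mul_pow {E : Type*} [Norm E] {a : ℕ → E} {r : ℝ} (hr : 0 < r)
    (ha : Summable fun k => ‖a k‖ * r ^ k) (m : ℕ) :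
    Summable fun k => ‖a (k + m)‖ * r ^ k := by
  refine (((summable_nat_add_iff m).2 ha).div_const (r ^ m)).congr fun k => ?_
  rw [pow_add]
  field_simp

lemma norm_tsum_nat_add_mul_ofReal_pow_mul_le {a u : ℕ → ℂ} {C r : ℝ} (hl : 0 ≤ l)
    (hlr : l ≤ r) (hr : 0 < r) (hu : ∀ k, ‖u k‖ ≤ C) (ha : Summable fun k => ‖a k‖ * r ^ k)
    (n m : ℕ) :
    ‖∑' k, a (k + m) * (l : ℂ) ^ (k + m + n) * u (k + m)‖ ≤
      C * l ^ (n + m) * ∑' k, ‖a (k + m)‖ * r ^ k := by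
  refine tsum_of_norm_bounded
    ((summable_norm_nat_add_mul_pow hr ha m).hasSum.mul_left (C * l ^ (n + m))) fun k => ?_
  rw [add_assoc k m n, add_comm m n]
  exact norm_mul_ofReal_pow_add_mul_le hl hlr (hu _) k (n + m)

lemma norm_sum_range_mul_ofReal_pow_mul_le {c u : ℕ → ℂ} {B C : ℝ} (N n : ℕ) (hl : 0 ≤ l)
    (hc : ∀ k ≤ N, ‖c k‖ ≤ B * l ^ (N + 1 - k)) (hu : ∀ k, ‖u k‖ ≤ C) :
    ‖∑ k ∈ range (N + 1), c k * (l : ℂ) ^ (k + n) * u k‖ ≤ (N + 1) * B * C * l ^ (n + N + 1) := by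
  have hterm : ∀ k ∈ range (N + 1), ‖c k * (l : ℂ) ^ (k + n) * u k‖ ≤ B * C * l ^ (n + N + 1) := by
    intro k hk
    have hkN := mem_range_succ_iff.1 hk
    rw [norm_mul_ofReal_pow_mul hl]
    calc ‖c k‖ * l ^ (k + n) * ‖u k‖ ≤ B * l ^ (N + 1 - k) * l ^ (k + n) * C := by
          have hB : 0 ≤ B * l ^ (N + 1 - k) := (norm_nonneg _).trans (hc k hkN)
          gcongr
          exacts [hc k hkN, hu k]
      _ = B * C * l ^ (n + N + 1) := by
          rw [show n + N + 1 = (N + 1 - k) + (k + n) by omega, pow_add]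
          ring
  refine (norm_sum_le_of_le _ hterm).trans_eq ?_
  rw [sum_const, card_range, nsmul_eq_mul]
  push_cast
  ring

end MultipoleSeries

lemma norm_le_mul_pow_of_eq_zero_of_le {E : Type*} [SeminormedAddGroup E] {e : E} {K l : ℝ}
    {N n : ℕ} (hl0 : 0 < l) (hl1 : l ≤ 1) (he : ‖e‖ ≤ K * l ^ (n + N + 1))
    (hzero : n ≤ N + 1 → e = 0) : ‖e‖ ≤ K * l ^ (2 * N + 3) := by
  have hK : 0 ≤ K := nonneg_of_mul_nonneg_left ((norm_nonneg e).trans he) (by positivity)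
  by_cases hn : n ≤ N + 1
  · rw [hzero hn, norm_zero]
    positivity
  · exact he.trans (mul_le_mul_of_nonneg_left (pow_le_pow_of_le_one hl0.le hl1 (by omega)) hK)

/-- Error of the matched multipole coefficients: with exact coefficients
f_n = Σ_{k≥0} g_k λ^{k+n} h_{n,k}, approximations
f̂_n = Σ_{k≤N} b_k λ^{k+n} h_{n,k}, b = g + b₂, b₂,k = O(λ^{N+1-k}),
h = O(1), and exact matching f̂_n = f_n for n = 1,…,N+1, the error satisfies
f̂_n − f_n = Σ_{k≤N} b₂,k λ^{k+n} h_{n,k} − Σ_{k>N} g_k λ^{k+n} h_{n,k}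
           = O(λ^{n+N+1}) for every n ≥ 1,
hence O(λ^{2N+3}) for all coefficients and, after dividing by one power of λ
(number of panels ∝ 1/λ), the far-field rate is O(λ^{2N+2}). -/
theorem stmt15 (N : ℕ) (g : ℕ → ℂ) (h : ℕ → ℕ → ℝ → ℂ)
    (f fhat : ℕ → ℝ → ℂ) (b b2 : ℝ → ℕ → ℂ)
    (hbound : ∃ C lam0 : ℝ, 0 < lam0 ∧
      ∀ n k : ℕ, ∀ l ∈ Set.Ioo (0:ℝ) lam0, ‖h n k l‖ ≤ C)
    (hsum : ∃ lam0 : ℝ, 0 < lam0 ∧ ∀ l ∈ Set.Ioo (0:ℝ) lam0,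
      Summable (fun k : ℕ => ‖g k‖ * l^k))
    (hf : ∀ n : ℕ, ∀ l : ℝ, f n l = ∑' k : ℕ, g k * (l:ℂ)^(k + n) * h n k l)
    (hbsplit : ∀ l : ℝ, ∀ k ≤ N, b l k = g k + b2 l k)
    (hb2bound : ∃ C lam0 : ℝ, 0 < lam0 ∧
      ∀ k ≤ N, ∀ l ∈ Set.Ioo (0:ℝ) lam0, ‖b2 l k‖ ≤ C * l^(N + 1 - k))
    (hfhat : ∀ n : ℕ, ∀ l : ℝ,
      fhat n l = ∑ k ∈ range (N+1), b l k * (l:ℂ)^(k + n) * h n k l)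
    (hmatch : ∃ lam0 : ℝ, 0 < lam0 ∧ ∀ l ∈ Set.Ioo (0:ℝ) lam0,
      ∀ n : ℕ, 1 ≤ n → n ≤ N + 1 → fhat n l = f n l) :
    (∃ lam0 : ℝ, 0 < lam0 ∧ ∀ l ∈ Set.Ioo (0:ℝ) lam0, ∀ n : ℕ,
        fhat n l - f n l =
          ∑ k ∈ range (N+1), b2 l k * (l:ℂ)^(k + n) * h n k l -
          ∑' k : ℕ, g (k + N + 1) * (l:ℂ)^((k + N + 1) + n) * h n (k + N + 1) l) ∧
    (∃ C lam1 : ℝ, 0 < lam1 ∧ ∀ l ∈ Set.Ioo (0:ℝ) lam1, ∀ n : ℕ, 1 ≤ n →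
        ‖fhat n l - f n l‖ ≤ C * l^(n + N + 1) ∧
        ‖fhat n l - f n l‖ ≤ C * l^(2*N + 3) ∧
        ‖fhat n l - f n l‖ / l ≤ C * l^(2*N + 2)) := by
  obtain ⟨Ch, lamh, hlamh, hh⟩ := hbound
  obtain ⟨lams, hlams, hg⟩ := hsum
  obtain ⟨Cb, lamb, hlamb, hb2⟩ := hb2bound
  obtain ⟨lamm, hlamm, hm⟩ := hmatch
  have herror : ∀ l ∈ Set.Ioo 0 (min lamh lams), ∀ n, fhat n l - f n l =
      ∑ k ∈ range (N + 1), b2 l k * (l : ℂ) ^ (k + n) * h n k l -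
      ∑' k, g (k + N + 1) * (l : ℂ) ^ ((k + N + 1) + n) * h n (k + N + 1) l := by
    rintro l ⟨hl0, hl⟩ n
    rw [lt_min_iff] at hl
    have hfhat_split : fhat n l = ∑ k ∈ range (N + 1),
        (g k * (l : ℂ) ^ (k + n) * h n k l + b2 l k * (l : ℂ) ^ (k + n) * h n k l) := by
      rw [hfhat]
      refine sum_congr rfl fun k hk => ?_
      rw [hbsplit l k (mem_range_succ_iff.1 hk)]
      ring
    rw [hfhat_split, hf]
    exact sum_add_sub_tsum_eq_sum_sub_tsum_nat_add
      (summable_mul_ofReal_pow_add_mul hl0.le (fun k => hh n k l ⟨hl0, hl.1⟩) (hg l ⟨hl0, hl.2⟩) n)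
      (N + 1)
  refine ⟨⟨min lamh lams, lt_min hlamh hlams, herror⟩, ?_⟩
  set r := min (min lamh lams) (min lamb (min lamm 1)) / 2
  have hr : 0 < r := by positivity
  have hr_lt : r < min (min lamh lams) (min lamb (min lamm 1)) := half_lt_self (by positivity)
  simp only [lt_min_iff] at hr_lt
  obtain ⟨⟨hrh, hrs⟩, hrb, hrm, hr1⟩ := hr_lt
  set S := ∑' k, ‖g (k + (N + 1))‖ * r ^ k
  refine ⟨((N : ℝ) + 1) * Cb * Ch + Ch * S, r, hr, fun l ⟨hl0, hlr⟩ n hn => ?_⟩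
  have hhl : ∀ n k, ‖h n k l‖ ≤ Ch := fun n k => hh n k l ⟨hl0, hlr.trans hrh⟩
  have hnear : ‖fhat n l - f n l‖ ≤ (((N : ℝ) + 1) * Cb * Ch + Ch * S) * l ^ (n + N + 1) := by
    rw [herror l ⟨hl0, lt_min (hlr.trans hrh) (hlr.trans hrs)⟩ n]
    have hfinite := norm_sum_range_mul_ofReal_pow_mul_le N n hl0.le
      (fun k hk => hb2 k hk l ⟨hl0, hlr.trans hrb⟩) (hhl n)
    have htail := norm_tsum_nat_add_mul_ofReal_pow_mul_le hl0.le hlr.le hr (hhl n)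
      (hg r ⟨hr, hrs⟩) n (N + 1)
    calc _ ≤ _ := norm_sub_le _ _
      _ ≤ _ := add_le_add hfinite htail
      _ = _ := by ring
  have hfar := norm_le_mul_pow_of_eq_zero_of_le hl0 (hlr.trans hr1).le hnear
    fun hnN => sub_eq_zero.2 (hm l ⟨hl0, hlr.trans hrm⟩ n hn hnN)
  refine ⟨hnear, hfar, (div_le_iff₀ hl0).2 ?_⟩
  rwa [mul_assoc, ← pow_succ]
end
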